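/- The function f(x,y) = -2Λ(x+y) + 2Λ(y) + Λ(x) attains its maximum on the open triangle {0 < x, 0 < y, x + y < π} at (π/2, π/4), and this maximum value is 4Λ(π/4), where Λ is the Lobachevsky function. -/

import Mathlib

/-!
Since `Λ'(θ) = -log (2 sin θ)`, the derivative of `y ↦ f x y` is `2 log (sin (x + y) / sin y)`,
which is positive for `y < (π - x) / 2` and negative beyond: `x + y` and `y` are placed
symmetrically about `π / 2` exactly at `y = (π - x) / 2`. Along that line the derivative in `x` is
`log (cot (x / 2))`, which changes sign at `x = π / 2`. The value comes from `Λ(π - θ) = -Λ(θ)`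
and `Λ(π / 2) = 0`, the latter being Euler's `∫₀^{π/2} log sin = -(π / 2) log 2`.
-/

open Real

noncomputable def lob (θ : ℝ) : ℝ := -∫ t in (0:ℝ)..θ, Real.log |2 * Real.sin t|

noncomputable def f (x y : ℝ) : ℝ := -2 * lob (x + y) + 2 * lob y + lob x

open Set MeasureTheory intervalIntegral

lemma intervalIntegrable_log_abs_two_mul_sin (a b : ℝ) :
    IntervalIntegrable (fun t => log |2 * sin t|) volume a b :=
  (analyticOnNhd_const.mul analyticOnNhd_sin).meromorphicOn.intervalIntegrable_log_norm

lemma lob_pi_sub_add_lob (θ : ℝ) : lob (π - θ) + lob θ = lob π := by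
  have hrefl : ∫ t in (π - θ)..π, log |2 * sin t| = ∫ t in (0:ℝ)..θ, log |2 * sin t| := by
    simpa only [sin_pi_sub, sub_zero] using
      (integral_comp_sub_left (fun t => log |2 * sin t|) π (a := 0) (b := θ)).symm
  rw [lob, lob, lob, ← hrefl, ← integral_add_adjacent_intervals
    (intervalIntegrable_log_abs_two_mul_sin 0 (π - θ)) (intervalIntegrable_log_abs_two_mul_sin _ π)]
  ring

lemma lob_pi_div_two : lob (π / 2) = 0 := by
  have h : ∫ t in (0:ℝ)..(π / 2), log |2 * sin t| =
      ∫ t in (0:ℝ)..(π / 2), (log 2 + log (sin t)) := by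
    refine integral_congr_ae (Filter.Eventually.of_forall fun t ht => ?_)
    rw [uIoc_of_le (by positivity)] at ht
    have hsin : 0 < sin t := sin_pos_of_pos_of_lt_pi ht.1 (by linarith [ht.2, pi_pos])
    rw [abs_of_pos (by positivity), log_mul two_ne_zero hsin.ne']
  rw [lob, h, integral_add (g := fun t => log (sin t)) intervalIntegrable_const
    intervalIntegrable_log_sin, intervalIntegral.integral_const, integral_log_sin_zero_pi_div_two,
    smul_eq_mul]
  ring

lemma lob_pi : lob π = 0 := by
  simpa [show π - π / 2 = π / 2 by ring, lob_pi_div_two] using (lob_pi_sub_add_lob (π / 2)).symm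

lemma lob_pi_sub (θ : ℝ) : lob (π - θ) = -lob θ := by
  linarith [lob_pi_sub_add_lob θ, lob_pi]

lemma hasDerivAt_lob {θ : ℝ} (hθ : sin θ ≠ 0) : HasDerivAt lob (-log (2 * sin θ)) θ := by
  have hcont : ContinuousAt (fun t => log |2 * sin t|) θ :=
    (continuous_const.mul continuous_sin).abs.continuousAt.log (by simpa using hθ)
  have hmeas : Measurable (fun t => log |2 * sin t|) := by fun_prop
  have h := (integral_hasDerivAt_right (intervalIntegrable_log_abs_two_mul_sin 0 θ)
    hmeas.stronglyMeasurable.stronglyMeasurableAtFilter hcont).neg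
  rw [log_abs] at h
  exact h

lemma isMaxOn_Ioo_of_hasDerivAt {φ φ' : ℝ → ℝ} {a b c : ℝ} (hc : c ∈ Ioo a b)
    (hφ : ∀ t ∈ Ioo a b, HasDerivAt φ (φ' t) t)
    (hnonneg : ∀ t ∈ Ioo a c, 0 ≤ φ' t) (hnonpos : ∀ t ∈ Ioo c b, φ' t ≤ 0) :
    IsMaxOn φ (Ioo a b) c := by
  intro x hx
  have hcont {s : Set ℝ} (hs : s ⊆ Ioo a b) : ContinuousOn φ s :=
    fun t ht => (hφ t (hs ht)).continuousAt.continuousWithinAt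
  rcases le_total x c with hxc | hcx
  · have hsub : Icc x c ⊆ Ioo a b := Icc_subset_Ioo hx.1 hc.2
    refine monotoneOn_of_hasDerivWithinAt_nonneg (f' := φ') (convex_Icc x c) (hcont hsub)
      (fun t ht => ?_) (fun t ht => ?_) ⟨le_rfl, hxc⟩ ⟨hxc, le_rfl⟩ hxc
    · exact (hφ t (hsub (interior_subset ht))).hasDerivWithinAt
    · rw [interior_Icc] at ht
      exact hnonneg t ⟨hx.1.trans ht.1, ht.2⟩
  · have hsub : Icc c x ⊆ Ioo a b := Icc_subset_Ioo hc.1 hx.2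
    refine antitoneOn_of_hasDerivWithinAt_nonpos (f' := φ') (convex_Icc c x) (hcont hsub)
      (fun t ht => ?_) (fun t ht => ?_) ⟨le_rfl, hcx⟩ ⟨hcx, le_rfl⟩ hcx
    · exact (hφ t (hsub (interior_subset ht))).hasDerivWithinAt
    · rw [interior_Icc] at ht
      exact hnonpos t ⟨ht.1, ht.2.trans hx.2⟩

lemma sin_add_sub_sin (x y : ℝ) : sin (x + y) - sin y = 2 * sin (x / 2) * cos (y + x / 2) := by
  rw [sin_sub_sin]; ring_nf

lemma sin_le_sin_add {x y : ℝ} (hx : 0 ≤ x) (hy : 0 ≤ y) (hxy : x + 2 * y ≤ π) :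
    sin y ≤ sin (x + y) := by
  have hs : 0 ≤ sin (x / 2) := sin_nonneg_of_nonneg_of_le_pi (by linarith) (by linarith)
  have hc : 0 ≤ cos (y + x / 2) := cos_nonneg_of_mem_Icc ⟨by linarith [pi_pos], by linarith⟩
  nlinarith [sin_add_sub_sin x y, mul_nonneg hs hc]

lemma sin_add_le_sin {x y : ℝ} (hx : 0 ≤ x) (hxy : x + y ≤ π) (hxy' : π ≤ x + 2 * y) :
    sin (x + y) ≤ sin y := by
  have hs : 0 ≤ sin (x / 2) := sin_nonneg_of_nonneg_of_le_pi (by linarith) (by linarith)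
  have hc : cos (y + x / 2) ≤ 0 := cos_nonpos_of_pi_div_two_le_of_le (by linarith) (by linarith)
  nlinarith [sin_add_sub_sin x y, mul_nonpos_of_nonneg_of_nonpos hs hc]

lemma hasDerivAt_f_right {x y : ℝ} (hy : sin y ≠ 0) (hxy : sin (x + y) ≠ 0) :
    HasDerivAt (f x) (2 * (log (2 * sin (x + y)) - log (2 * sin y))) y := by
  have h := (((hasDerivAt_lob hxy).comp y ((hasDerivAt_id y).const_add x)).const_mul (-2)).add
    ((hasDerivAt_lob hy).const_mul 2) |>.add_const (lob x)
  exact h.congr_deriv (by ring)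

lemma f_le_f_pi_sub_div_two {x y : ℝ} (hx : 0 < x) (hy : 0 < y) (hxy : x + y < π) :
    f x y ≤ f x ((π - x) / 2) := by
  have hsin {t : ℝ} (ht : t ∈ Ioo 0 (π - x)) : 0 < sin t ∧ 0 < sin (x + t) :=
    ⟨sin_pos_of_pos_of_lt_pi ht.1 (by linarith [ht.2]),
      sin_pos_of_pos_of_lt_pi (by linarith [ht.1]) (by linarith [ht.2])⟩
  refine isMaxOn_Ioo_of_hasDerivAt (φ := f x) ⟨by linarith, by linarith⟩
    (fun t ht => hasDerivAt_f_right (hsin ht).1.ne' (hsin ht).2.ne') (fun t ht => ?_)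
    (fun t ht => ?_) ⟨hy, by linarith⟩
  · have hpos := (hsin ⟨ht.1, by linarith [ht.2]⟩).1
    have hle : sin t ≤ sin (x + t) := sin_le_sin_add hx.le ht.1.le (by linarith [ht.2])
    linarith [log_le_log (by linarith) (by linarith : 2 * sin t ≤ 2 * sin (x + t))]
  · have hpos := (hsin ⟨by linarith [ht.1], ht.2⟩).2
    have hle : sin (x + t) ≤ sin t := sin_add_le_sin hx.le (by linarith [ht.2]) (by linarith [ht.1])
    linarith [log_le_log (by linarith) (by linarith : 2 * sin (x + t) ≤ 2 * sin t)]

lemma sin_le_cos_of_le_pi_div_four {θ : ℝ} (h0 : 0 ≤ θ) (h : θ ≤ π / 4) : sin θ ≤ cos θ := by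
  rw [← sin_pi_div_two_sub]
  exact sin_le_sin_of_le_of_le_pi_div_two (by linarith [pi_pos]) (by linarith) (by linarith)

lemma cos_le_sin_of_pi_div_four_le {θ : ℝ} (h : π / 4 ≤ θ) (h1 : θ ≤ π / 2) : cos θ ≤ sin θ := by
  rw [← sin_pi_div_two_sub]
  exact sin_le_sin_of_le_of_le_pi_div_two (by linarith) h1 (by linarith)

lemma hasDerivAt_f_pi_sub_div_two {x : ℝ} (hx : sin x ≠ 0) :
    HasDerivAt (fun t => f t ((π - t) / 2))
      (log (2 * cos (x / 2)) - log (2 * sin (x / 2))) x := by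
  have hsin_cos : sin x = 2 * sin (x / 2) * cos (x / 2) := by
    rw [← sin_two_mul, mul_div_cancel₀ x two_ne_zero]
  have hs : sin (x / 2) ≠ 0 := fun h => hx (by rw [hsin_cos, h]; ring)
  have hc : cos (x / 2) ≠ 0 := fun h => hx (by rw [hsin_cos, h]; ring)
  have h₁ : sin (x + (π - x) / 2) = cos (x / 2) := by
    rw [← sin_add_pi_div_two]; ring_nf
  have h₂ : sin ((π - x) / 2) = cos (x / 2) := by
    rw [← sin_pi_div_two_sub]; ring_nf
  have hlog : log (2 * sin x) = log (2 * sin (x / 2)) + log (2 * cos (x / 2)) := by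
    rw [← log_mul (by simpa using hs) (by simpa using hc), hsin_cos]; ring_nf
  have hhalf : HasDerivAt (fun t => (π - t) / 2) (-1 / 2) x :=
    ((hasDerivAt_id' x).const_sub π).div_const 2
  have hsum : HasDerivAt (fun t => t + (π - t) / 2) (1 + -1 / 2) x := (hasDerivAt_id' x).add hhalf
  have h := ((((hasDerivAt_lob (h₁ ▸ hc)).comp x hsum).const_mul (-2)).add
    (((hasDerivAt_lob (h₂ ▸ hc)).comp x hhalf).const_mul 2)).add (hasDerivAt_lob hx)
  rw [h₁, h₂, hlog] at h
  exact h.congr_deriv (by ring)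

lemma f_pi_sub_div_two_le {x : ℝ} (hx : 0 < x) (hxπ : x < π) :
    f x ((π - x) / 2) ≤ f (π / 2) (π / 4) := by
  have hπ : (π - π / 2) / 2 = π / 4 := by ring
  rw [← hπ]
  refine isMaxOn_Ioo_of_hasDerivAt (φ := fun t => f t ((π - t) / 2))
    ⟨by linarith [pi_pos], by linarith [pi_pos]⟩
    (fun t ht => hasDerivAt_f_pi_sub_div_two (sin_pos_of_pos_of_lt_pi ht.1 ht.2).ne')
    (fun t ht => ?_) (fun t ht => ?_) ⟨hx, hxπ⟩
  · have hs : 0 < sin (t / 2) := sin_pos_of_pos_of_lt_pi (by linarith [ht.1]) (by linarith [ht.2])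
    have hle : sin (t / 2) ≤ cos (t / 2) :=
      sin_le_cos_of_le_pi_div_four (by linarith [ht.1]) (by linarith [ht.2])
    linarith [log_le_log (by linarith) (by linarith : 2 * sin (t / 2) ≤ 2 * cos (t / 2))]
  · have hc : 0 < cos (t / 2) := cos_pos_of_mem_Ioo ⟨by linarith [ht.1], by linarith [ht.2]⟩
    have hle : cos (t / 2) ≤ sin (t / 2) :=
      cos_le_sin_of_pi_div_four_le (by linarith [ht.1]) (by linarith [ht.2])
    linarith [log_le_log (by linarith) (by linarith : 2 * cos (t / 2) ≤ 2 * sin (t / 2))]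

lemma f_pi_div_two_pi_div_four : f (π / 2) (π / 4) = 4 * lob (π / 4) := by
  have h : π / 2 + π / 4 = π - π / 4 := by ring
  rw [f, h, lob_pi_sub, lob_pi_div_two]
  ring

theorem max_value :
    (∀ x y : ℝ, 0 < x → 0 < y → x + y < π → f x y ≤ f (π / 2) (π / 4)) ∧
      f (π / 2) (π / 4) = 4 * lob (π / 4) :=
  ⟨fun x y hx hy hxy => (f_le_f_pi_sub_div_two hx hy hxy).trans
    (f_pi_sub_div_two_le hx (by linarith)), f_pi_div_two_pi_div_four⟩
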